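/- Let E = ⊕_{n∈ℕ} E^n be a copresimplicial complex vector space with cofaces f_k : E^n → E^{n+1} (0 ≤ k ≤ n+1) satisfying f_ℓ f_k = f_k f_{ℓ−1} for k < ℓ, and let q be a primitive N-th root of unity (N ≥ 2). Define d_q(x) = ∑_{k=0}^n q^k f_k(x) − q^n f_{n+1}(x) for x ∈ E^n. Then (d_q)^N = 0. -/

import Mathlib

/-- Iterated composition of a degree-one family of linear maps:
`opIter d m n : E n → E (n+m)` is `d ∘ ⋯ ∘ d` (`m` times). -/
def opIter {E : ℕ → Type*} [∀ n, AddCommGroup (E n)] [∀ n, Module ℂ (E n)]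
    (d : ∀ n, E n →ₗ[ℂ] E (n + 1)) : ∀ (m n : ℕ), E n →ₗ[ℂ] E (n + m)
  | 0, _ => LinearMap.id
  | m + 1, n => (d (n + m)).comp (opIter d m n)

open DirectSum Finset

section CopresAux

variable {E : ℕ → Type*} [∀ n, AddCommGroup (E n)] [∀ n, Module ℂ (E n)]

noncomputable def glue (g : ∀ s, E s →ₗ[ℂ] E (s + 1)) :
    (⨁ n, E n) →ₗ[ℂ] ⨁ n, E n :=
  DirectSum.toModule ℂ ℕ _ fun s => (DirectSum.lof ℂ ℕ E (s + 1)).comp (g s)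

theorem glue_lof (g : ∀ s, E s →ₗ[ℂ] E (s + 1)) (s : ℕ) :
    (glue g).comp (DirectSum.lof ℂ ℕ E s) =
      (DirectSum.lof ℂ ℕ E (s + 1)).comp (g s) := by
  ext x
  simp [glue, DirectSum.toModule_lof]

variable (f : ∀ s, ℕ → (E s →ₗ[ℂ] E (s + 1))) (q : ℂ)

noncomputable def Phi (a : ℕ) : (⨁ n, E n) →ₗ[ℂ] ⨁ n, E n :=
  glue fun s => f s a

noncomputable def Dt (t : ℕ) : (⨁ n, E n) →ₗ[ℂ] ⨁ n, E n :=
  glue fun s => (∑ k ∈ Icc t s, q ^ k • f s k) - q ^ s • f s (s + 1)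

noncomputable def Tb (n : ℕ) : ℕ → ℕ → ((⨁ i, E i) →ₗ[ℂ] ⨁ i, E i)
  | 0, _ => LinearMap.id
  | m + 1, t => ∑ a ∈ Icc t n, q ^ a • ((Phi f a).comp (Tb n m a))

noncomputable def Tc (n s : ℕ) : (m t : ℕ) → (E s →ₗ[ℂ] E (s + m))
  | 0, _ => LinearMap.id
  | m + 1, t => ∑ a ∈ Icc t n, q ^ a • ((f (s + m) a).comp (Tc n s m a))

-- composition helpers
theorem sum_comp' {V W X : Type*} [AddCommGroup V] [Module ℂ V] [AddCommGroup W]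
    [Module ℂ W] [AddCommGroup X] [Module ℂ X] {ι : Type*} (u : Finset ι)
    (A : ι → (W →ₗ[ℂ] X)) (B : V →ₗ[ℂ] W) :
    (∑ i ∈ u, A i).comp B = ∑ i ∈ u, (A i).comp B := by
  ext x; simp

theorem comp_sum' {V W X : Type*} [AddCommGroup V] [Module ℂ V] [AddCommGroup W]
    [Module ℂ W] [AddCommGroup X] [Module ℂ X] {ι : Type*} (u : Finset ι)
    (A : W →ₗ[ℂ] X) (B : ι → (V →ₗ[ℂ] W)) :
    A.comp (∑ i ∈ u, B i) = ∑ i ∈ u, A.comp (B i) := by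
  ext x; simp

theorem Phi_lof (a s : ℕ) :
    (Phi f a).comp (DirectSum.lof ℂ ℕ E s) =
      (DirectSum.lof ℂ ℕ E (s + 1)).comp (f s a) := glue_lof _ s

theorem Dt_lof (t s : ℕ) :
    (Dt f q t).comp (DirectSum.lof ℂ ℕ E s) =
      (DirectSum.lof ℂ ℕ E (s + 1)).comp
        ((∑ k ∈ Icc t s, q ^ k • f s k) - q ^ s • f s (s + 1)) := glue_lof _ s

theorem Tb_lof (n s : ℕ) : ∀ m t,
    (Tb f q n m t).comp (DirectSum.lof ℂ ℕ E s) =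
      (DirectSum.lof ℂ ℕ E (s + m)).comp (Tc f q n s m t)
  | 0, t => by simp [Tb, Tc]
  | m + 1, t => by
    rw [Tb, Tc, sum_comp', comp_sum']
    refine Finset.sum_congr rfl fun a ha => ?_
    rw [LinearMap.smul_comp, LinearMap.comp_smul, LinearMap.comp_assoc,
      Tb_lof n s m a, ← LinearMap.comp_assoc, Phi_lof, LinearMap.comp_assoc]
    rfl


theorem key_f
    (hf : ∀ n k l, k < l → l ≤ n + 2 →
      (f (n + 1) l).comp (f n k) = (f (n + 1) k).comp (f n (l - 1)))
    (t a s : ℕ) (hta : t ≤ a) (has : a ≤ s + 1) :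
    ((∑ k ∈ Icc t (s + 1), q ^ k • f (s + 1) k) - q ^ (s + 1) • f (s + 1) (s + 2)).comp (f s a)
      = (∑ k ∈ Icc t a, q ^ k • f (s + 1) k).comp (f s a)
        + q • (f (s + 1) a).comp ((∑ j ∈ Icc a s, q ^ j • f s j) - q ^ s • f s (s + 1)) := by
  have hsplit : Icc t (s + 1) = Icc t a ∪ Ioc a (s + 1) := by
    ext k; simp only [mem_Icc, mem_Ioc, mem_union]; omega
  have hdisj : Disjoint (Icc t a) (Ioc a (s + 1)) := by
    rw [Finset.disjoint_left]; intro k hk hk'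
    simp only [mem_Icc, mem_Ioc] at hk hk'; omega
  have hIoc : ((∑ k ∈ Ioc a (s + 1), q ^ k • f (s + 1) k).comp (f s a))
      = ∑ j ∈ Icc a s, (q ^ (j + 1)) • ((f (s + 1) a).comp (f s j)) := by
    rw [sum_comp', ← Finset.Icc_add_one_left_eq_Ioc,
      show Icc (a + 1) (s + 1) = (Icc a s).map (addRightEmbedding 1) by
        rw [Finset.map_add_right_Icc],
      Finset.sum_map]
    refine Finset.sum_congr rfl fun j hj => ?_
    simp only [mem_Icc] at hj
    simp only [addRightEmbedding_apply]
    rw [LinearMap.smul_comp, hf s a (j + 1) (by omega) (by omega)]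
    simp
  have htop : ((q ^ (s + 1) • f (s + 1) (s + 2)).comp (f s a))
      = q ^ (s + 1) • ((f (s + 1) a).comp (f s (s + 1))) := by
    rw [LinearMap.smul_comp, hf s a (s + 2) (by omega) (by omega)]
    norm_num
  rw [LinearMap.sub_comp, hsplit, Finset.sum_union hdisj, LinearMap.add_comp, hIoc, htop,
    LinearMap.comp_sub, comp_sum', LinearMap.comp_smul, smul_sub, Finset.smul_sum]
  have h1 : ∀ j, q • q ^ j • ((f (s + 1) a).comp (f s j))
      = q ^ (j + 1) • ((f (s + 1) a).comp (f s j)) := by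
    intro j; rw [smul_smul, ← pow_succ']
  simp only [LinearMap.comp_smul, h1, smul_smul, ← pow_succ']
  abel

theorem comm_lemma
    (hf : ∀ n k l, k < l → l ≤ n + 2 →
      (f (n + 1) l).comp (f n k) = (f (n + 1) k).comp (f n (l - 1)))
    (t a s : ℕ) (hta : t ≤ a) (has : a ≤ s + 1) :
    (Dt f q t).comp ((Phi f a).comp (DirectSum.lof ℂ ℕ E s)) =
      ((∑ k ∈ Icc t a, q ^ k • Phi f k).comp (Phi f a)
        + q • (Phi f a).comp (Dt f q a)).comp (DirectSum.lof ℂ ℕ E s) := by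
  have L : (Dt f q t).comp ((Phi f a).comp (DirectSum.lof ℂ ℕ E s))
      = (DirectSum.lof ℂ ℕ E (s + 1 + 1)).comp
          (((∑ k ∈ Icc t (s + 1), q ^ k • f (s + 1) k)
            - q ^ (s + 1) • f (s + 1) (s + 1 + 1)).comp (f s a)) := by
    rw [Phi_lof, ← LinearMap.comp_assoc, Dt_lof, LinearMap.comp_assoc]
  have e1 : (∑ k ∈ Icc t a, q ^ k • Phi f k).comp (DirectSum.lof ℂ ℕ E (s + 1))
      = (DirectSum.lof ℂ ℕ E (s + 1 + 1)).comp (∑ k ∈ Icc t a, q ^ k • f (s + 1) k) := by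
    rw [sum_comp', comp_sum']
    refine Finset.sum_congr rfl fun k hk => ?_
    rw [LinearMap.smul_comp, Phi_lof, LinearMap.comp_smul]
  have R1 : ((∑ k ∈ Icc t a, q ^ k • Phi f k).comp (Phi f a)).comp (DirectSum.lof ℂ ℕ E s)
      = (DirectSum.lof ℂ ℕ E (s + 1 + 1)).comp
          ((∑ k ∈ Icc t a, q ^ k • f (s + 1) k).comp (f s a)) := by
    rw [LinearMap.comp_assoc, Phi_lof, ← LinearMap.comp_assoc, e1, LinearMap.comp_assoc]
  have R2 : (q • (Phi f a).comp (Dt f q a)).comp (DirectSum.lof ℂ ℕ E s)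
      = (DirectSum.lof ℂ ℕ E (s + 1 + 1)).comp
          (q • (f (s + 1) a).comp ((∑ j ∈ Icc a s, q ^ j • f s j) - q ^ s • f s (s + 1))) := by
    rw [LinearMap.smul_comp, LinearMap.comp_assoc, Dt_lof, ← LinearMap.comp_assoc,
      Phi_lof, LinearMap.comp_assoc, LinearMap.comp_smul]
  rw [L, LinearMap.add_comp, R1, R2, ← LinearMap.comp_add]
  exact congrArg _ (key_f f q hf t a s hta has)

theorem claim
    (hf : ∀ n k l, k < l → l ≤ n + 2 →
      (f (n + 1) l).comp (f n k) = (f (n + 1) k).comp (f n (l - 1)))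
    (n s : ℕ) (hns : n ≤ s) :
    ∀ m t, t ≤ n →
      (Dt f q t).comp ((Tb f q n m t).comp (DirectSum.lof ℂ ℕ E s)) =
        ((∑ i ∈ range (m + 1), q ^ i) • Tb f q n (m + 1) t
          + ∑ b ∈ Ioc n s, q ^ (m + b) • (Tb f q n m t).comp (Phi f b)
          - q ^ (s + m) • (Tb f q n m t).comp (Phi f (s + 1))).comp
          (DirectSum.lof ℂ ℕ E s) := by
  intro m
  induction m with
  | zero =>
    intro t htn
    have hsplit : Icc t s = Icc t n ∪ Ioc n s := by
      ext k; simp only [mem_Icc, mem_Ioc, mem_union]; omega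
    have hdisj : Disjoint (Icc t n) (Ioc n s) := by
      rw [Finset.disjoint_left]; intro k h1 h2
      simp only [mem_Icc, mem_Ioc] at h1 h2; omega
    have conc : (∑ k ∈ Icc t s, q ^ k • f s k) - q ^ s • f s (s + 1)
        = (∑ i ∈ range (0 + 1), q ^ i) • Tc f q n s 1 t
          + (∑ b ∈ Ioc n s, q ^ (0 + b) • f s b) - q ^ (s + 0) • f s (s + 1) := by
      have : Tc f q n s 1 t = ∑ a ∈ Icc t n, q ^ a • f s a := by
        rw [show Tc f q n s 1 t
            = ∑ a ∈ Icc t n, q ^ a • ((f (s + 0) a).comp (Tc f q n s 0 a)) from rfl]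
        refine Finset.sum_congr rfl fun a ha => ?_
        rw [show Tc f q n s 0 a = LinearMap.id from rfl, LinearMap.comp_id]
        rfl
      rw [this, hsplit, Finset.sum_union hdisj]
      simp
    have hR : ((∑ i ∈ range (0 + 1), q ^ i) • Tb f q n (0 + 1) t
          + ∑ b ∈ Ioc n s, q ^ (0 + b) • (Tb f q n 0 t).comp (Phi f b)
          - q ^ (s + 0) • (Tb f q n 0 t).comp (Phi f (s + 1))).comp
          (DirectSum.lof ℂ ℕ E s)
        = (DirectSum.lof ℂ ℕ E (s + 1)).comp
          ((∑ i ∈ range (0 + 1), q ^ i) • Tc f q n s 1 t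
            + (∑ b ∈ Ioc n s, q ^ (0 + b) • f s b) - q ^ (s + 0) • f s (s + 1)) := by
      rw [LinearMap.sub_comp, LinearMap.add_comp, LinearMap.smul_comp, Tb_lof,
        LinearMap.smul_comp, sum_comp', LinearMap.comp_sub, LinearMap.comp_add,
        LinearMap.comp_smul, LinearMap.comp_smul, comp_sum']
      congr 2
      · refine Finset.sum_congr rfl fun b hb => ?_
        rw [LinearMap.smul_comp, LinearMap.comp_smul,
          show Tb f q n 0 t = LinearMap.id from rfl, LinearMap.id_comp, Phi_lof]
      · rw [show Tb f q n 0 t = LinearMap.id from rfl, LinearMap.id_comp, Phi_lof]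
    rw [hR, show Tb f q n 0 t = LinearMap.id from rfl, LinearMap.id_comp, Dt_lof]
    exact congrArg _ conc
  | succ m IH =>
    intro t htn
    have H1 : (Dt f q t).comp ((Tb f q n (m + 1) t).comp (DirectSum.lof ℂ ℕ E s))
        = ∑ a ∈ Icc t n, q ^ a •
            ((Dt f q t).comp ((Phi f a).comp ((Tb f q n m a).comp (DirectSum.lof ℂ ℕ E s)))) := by
      rw [show Tb f q n (m + 1) t
          = ∑ a ∈ Icc t n, q ^ a • ((Phi f a).comp (Tb f q n m a)) from rfl,
        sum_comp', comp_sum']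
      refine Finset.sum_congr rfl fun a ha => ?_
      rw [LinearMap.smul_comp, LinearMap.comp_smul, LinearMap.comp_assoc]
    have H2 : ∀ a ∈ Icc t n,
        (Dt f q t).comp ((Phi f a).comp ((Tb f q n m a).comp (DirectSum.lof ℂ ℕ E s)))
          = ((∑ k ∈ Icc t a, q ^ k • Phi f k).comp ((Phi f a).comp (Tb f q n m a))).comp
              (DirectSum.lof ℂ ℕ E s)
            + q • (Phi f a).comp ((Dt f q a).comp
                ((Tb f q n m a).comp (DirectSum.lof ℂ ℕ E s))) := by
      intro a ha
      simp only [mem_Icc] at ha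
      ext x
      have hx : (Tb f q n m a) (DirectSum.lof ℂ ℕ E s x)
          = DirectSum.lof ℂ ℕ E (s + m) (Tc f q n s m a x) :=
        LinearMap.congr_fun (Tb_lof f q n s m a) x
      have hcomm := LinearMap.congr_fun
        (comm_lemma f q hf t a (s + m) ha.1 (by omega)) (Tc f q n s m a x)
      simp only [LinearMap.comp_apply, LinearMap.add_apply, LinearMap.smul_apply] at hcomm ⊢
      rw [hx, hcomm, ← hx]
    -- IH-rewritten inner operator
    set cm : ℂ := ∑ i ∈ range (m + 1), q ^ i with hcm
    have hIH : ∀ a ∈ Icc t n,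
        (Dt f q a).comp ((Tb f q n m a).comp (DirectSum.lof ℂ ℕ E s))
          = (cm • Tb f q n (m + 1) a
              + ∑ b ∈ Ioc n s, q ^ (m + b) • (Tb f q n m a).comp (Phi f b)
              - q ^ (s + m) • (Tb f q n m a).comp (Phi f (s + 1))).comp
              (DirectSum.lof ℂ ℕ E s) := by
      intro a ha
      simp only [mem_Icc] at ha
      exact IH a ha.2
    -- collection lemma
    have hcollect : ∀ c : ℕ,
        ∑ a ∈ Icc t n, q ^ a • ((Phi f a).comp ((Tb f q n m a).comp (Phi f c)))
          = (Tb f q n (m + 1) t).comp (Phi f c) := by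
      intro c
      rw [show Tb f q n (m + 1) t
          = ∑ a ∈ Icc t n, q ^ a • ((Phi f a).comp (Tb f q n m a)) from rfl, sum_comp']
      refine Finset.sum_congr rfl fun a _ => ?_
      rw [LinearMap.smul_comp, LinearMap.comp_assoc]
    have hcollect2 : ∑ a ∈ Icc t n, q ^ a • ((Phi f a).comp (Tb f q n (m + 1) a))
        = Tb f q n (m + 2) t := rfl
    -- double sum identity
    have keydouble : ∑ a ∈ Icc t n, q ^ a •
          ((∑ k ∈ Icc t a, q ^ k • Phi f k).comp ((Phi f a).comp (Tb f q n m a)))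
        = Tb f q n (m + 2) t := by
      have expand : ∀ a : ℕ,
          (∑ k ∈ Icc t a, q ^ k • Phi f k).comp ((Phi f a).comp (Tb f q n m a))
            = ∑ k ∈ Icc t a, q ^ k • ((Phi f k).comp ((Phi f a).comp (Tb f q n m a))) := by
        intro a
        rw [sum_comp']
        exact Finset.sum_congr rfl fun k _ => LinearMap.smul_comp _ _ _
      simp only [expand, Finset.smul_sum]
      rw [Finset.sum_comm' (t' := Icc t n) (s' := fun k => Icc k n)
        (fun a k => by simp only [mem_Icc]; omega)]
      rw [show Tb f q n (m + 2) t
          = ∑ k ∈ Icc t n, q ^ k • ((Phi f k).comp (Tb f q n (m + 1) k)) from rfl]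
      refine Finset.sum_congr rfl fun k hk => ?_
      rw [show Tb f q n (m + 1) k
          = ∑ a ∈ Icc k n, q ^ a • ((Phi f a).comp (Tb f q n m a)) from rfl,
        comp_sum', Finset.smul_sum]
      refine Finset.sum_congr rfl fun a ha => ?_
      rw [LinearMap.comp_smul, smul_comm]
    -- main assembly
    have H2' : ∑ a ∈ Icc t n, q ^ a •
          ((Dt f q t).comp ((Phi f a).comp ((Tb f q n m a).comp (DirectSum.lof ℂ ℕ E s))))
        = ∑ a ∈ Icc t n,
            (q ^ a • (((∑ k ∈ Icc t a, q ^ k • Phi f k).comp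
                ((Phi f a).comp (Tb f q n m a))).comp (DirectSum.lof ℂ ℕ E s))
              + q ^ a • (q • (Phi f a).comp ((Dt f q a).comp
                  ((Tb f q n m a).comp (DirectSum.lof ℂ ℕ E s))))) :=
      Finset.sum_congr rfl fun a ha => by rw [H2 a ha, smul_add]
    have part1 : ∑ a ∈ Icc t n, q ^ a •
          (((∑ k ∈ Icc t a, q ^ k • Phi f k).comp
            ((Phi f a).comp (Tb f q n m a))).comp (DirectSum.lof ℂ ℕ E s))
        = (Tb f q n (m + 2) t).comp (DirectSum.lof ℂ ℕ E s) := by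
      rw [← keydouble, sum_comp']
      exact Finset.sum_congr rfl fun a _ => (LinearMap.smul_comp _ _ _).symm
    have part2 : ∑ a ∈ Icc t n, q ^ a • (q • (Phi f a).comp ((Dt f q a).comp
          ((Tb f q n m a).comp (DirectSum.lof ℂ ℕ E s))))
        = ((q * cm) • Tb f q n (m + 2) t
            + ∑ b ∈ Ioc n s, q ^ (m + 1 + b) • (Tb f q n (m + 1) t).comp (Phi f b)
            - q ^ (s + (m + 1)) • (Tb f q n (m + 1) t).comp (Phi f (s + 1))).comp
            (DirectSum.lof ℂ ℕ E s) := by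
      have step : ∀ a ∈ Icc t n, q ^ a • (q • (Phi f a).comp ((Dt f q a).comp
            ((Tb f q n m a).comp (DirectSum.lof ℂ ℕ E s))))
          = ((q * cm) • (q ^ a • (Phi f a).comp (Tb f q n (m + 1) a))
              + ∑ b ∈ Ioc n s, q ^ (m + 1 + b) •
                  (q ^ a • (Phi f a).comp ((Tb f q n m a).comp (Phi f b)))
              - q ^ (s + (m + 1)) •
                  (q ^ a • (Phi f a).comp ((Tb f q n m a).comp (Phi f (s + 1))))).comp
              (DirectSum.lof ℂ ℕ E s) := by
        intro a ha
        rw [hIH a ha]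
        have expandR : (Phi f a).comp
              ((cm • Tb f q n (m + 1) a
                + ∑ b ∈ Ioc n s, q ^ (m + b) • (Tb f q n m a).comp (Phi f b)
                - q ^ (s + m) • (Tb f q n m a).comp (Phi f (s + 1))).comp
                (DirectSum.lof ℂ ℕ E s))
            = ((cm • (Phi f a).comp (Tb f q n (m + 1) a)
                + ∑ b ∈ Ioc n s, q ^ (m + b) •
                    (Phi f a).comp ((Tb f q n m a).comp (Phi f b))
                - q ^ (s + m) •
                    (Phi f a).comp ((Tb f q n m a).comp (Phi f (s + 1)))).comp
                (DirectSum.lof ℂ ℕ E s)) := by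
          rw [← LinearMap.comp_assoc]
          congr 1
          rw [LinearMap.comp_sub, LinearMap.comp_add, LinearMap.comp_smul,
            LinearMap.comp_smul, comp_sum']
          congr 2
          exact Finset.sum_congr rfl fun b _ => by rw [LinearMap.comp_smul]
        rw [expandR, ← LinearMap.smul_comp, ← LinearMap.smul_comp]
        congr 1
        simp only [smul_sub, smul_add, Finset.smul_sum]
        refine congrArg₂ (· - ·) (congrArg₂ (· + ·) ?_ ?_) ?_
        · simp only [smul_smul]; congr 1; ring
        · refine Finset.sum_congr rfl fun b _ => ?_
          simp only [smul_smul]; congr 1; ring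
        · simp only [smul_smul]; congr 1; ring
      rw [Finset.sum_congr rfl step, ← sum_comp']
      congr 1
      rw [Finset.sum_sub_distrib, Finset.sum_add_distrib]
      refine congrArg₂ (· - ·) (congrArg₂ (· + ·) ?_ ?_) ?_
      · rw [← Finset.smul_sum, hcollect2]
      · rw [Finset.sum_comm]
        refine Finset.sum_congr rfl fun b _ => ?_
        rw [← Finset.smul_sum, hcollect b]
      · rw [← Finset.smul_sum, hcollect (s + 1)]
    rw [H1, H2', Finset.sum_add_distrib, part1, part2, ← LinearMap.add_comp]
    congr 1
    rw [geom_sum_succ, ← hcm, add_smul, one_smul,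
      show Tb f q n (m + 1 + 1) t = Tb f q n (m + 2) t from rfl]
    abel

theorem main_prop
    (hf : ∀ n k l, k < l → l ≤ n + 2 →
      (f (n + 1) l).comp (f n k) = (f (n + 1) k).comp (f n (l - 1)))
    (n : ℕ) :
    ∀ m, (DirectSum.lof ℂ ℕ E (n + (m + 1))).comp
        (opIter (fun n => (∑ k ∈ Finset.range (n + 1), q ^ k • f n k)
          - q ^ n • f n (n + 1)) (m + 1) n)
      = (∏ j ∈ range (m + 1), ∑ i ∈ range (j + 1), q ^ i) •
          ((Tb f q n (m + 1) 0
            - q ^ n • (Tb f q n m 0).comp (Phi f (n + 1))).comp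
            (DirectSum.lof ℂ ℕ E n)) := by
  set d : ∀ s, E s →ₗ[ℂ] E (s + 1) := fun n =>
    (∑ k ∈ Finset.range (n + 1), q ^ k • f n k) - q ^ n • f n (n + 1) with hd
  have hIR : ∀ u : ℕ, Icc 0 u = range (u + 1) := by
    intro u; ext k; simp only [mem_Icc, mem_range]; omega
  have hDt : Dt f q 0 = glue d := by
    unfold Dt
    exact congrArg glue (funext fun u => by rw [hd, hIR u])
  intro m
  induction m with
  | zero =>
    have hTb1 : (Tb f q n 1 0).comp (DirectSum.lof ℂ ℕ E n)
        = (DirectSum.lof ℂ ℕ E (n + 1)).comp (∑ a ∈ Icc 0 n, q ^ a • f n a) := by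
      rw [show Tb f q n 1 0
          = ∑ a ∈ Icc 0 n, q ^ a • ((Phi f a).comp (Tb f q n 0 a)) from rfl,
        sum_comp', comp_sum']
      refine Finset.sum_congr rfl fun a _ => ?_
      rw [show Tb f q n 0 a = LinearMap.id from rfl, LinearMap.comp_id,
        LinearMap.smul_comp, Phi_lof, LinearMap.comp_smul]
    have hTb0 : ((Tb f q n 0 0).comp (Phi f (n + 1))).comp (DirectSum.lof ℂ ℕ E n)
        = (DirectSum.lof ℂ ℕ E (n + 1)).comp (f n (n + 1)) := by
      rw [show Tb f q n 0 0 = LinearMap.id from rfl, LinearMap.id_comp, Phi_lof]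
    rw [show opIter d (0 + 1) n = d n from rfl]
    rw [Finset.prod_range_one, Finset.sum_range_one, pow_zero, one_smul,
      LinearMap.sub_comp, hTb1, LinearMap.smul_comp, hTb0, ← LinearMap.comp_smul,
      ← LinearMap.comp_sub]
    rw [hd]
    congr 1
    rw [hIR n]
  | succ m IH =>
    have hstep : (DirectSum.lof ℂ ℕ E (n + (m + 1 + 1))).comp (opIter d (m + 1 + 1) n)
        = (glue d).comp ((DirectSum.lof ℂ ℕ E (n + (m + 1))).comp (opIter d (m + 1) n)) := by
      refine LinearMap.ext fun x => ?_
      rw [show opIter d (m + 1 + 1) n = (d (n + (m + 1))).comp (opIter d (m + 1) n) from rfl]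
      simp only [LinearMap.comp_apply]
      exact (LinearMap.congr_fun (glue_lof d (n + (m + 1))) _).symm
    rw [hstep, IH, LinearMap.comp_smul, ← hDt]
    -- now: Dt 0 ∘ ((Tb (m+1) 0 - q^n • Tb m 0 ∘ Phi (n+1)) ∘ lof n)
    have hA : (Dt f q 0).comp ((Tb f q n (m + 1) 0).comp (DirectSum.lof ℂ ℕ E n))
        = ((∑ i ∈ range (m + 1 + 1), q ^ i) • Tb f q n (m + 1 + 1) 0
            - q ^ (n + (m + 1)) • (Tb f q n (m + 1) 0).comp (Phi f (n + 1))).comp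
            (DirectSum.lof ℂ ℕ E n) := by
      have := claim f q hf n n le_rfl (m + 1) 0 (Nat.zero_le n)
      rw [Finset.Ioc_self, Finset.sum_empty, add_zero] at this
      exact this
    have hB : (Dt f q 0).comp ((Tb f q n m 0).comp (DirectSum.lof ℂ ℕ E (n + 1)))
        = ((∑ i ∈ range (m + 1), q ^ i) • Tb f q n (m + 1) 0
            + q ^ (m + (n + 1)) • (Tb f q n m 0).comp (Phi f (n + 1))
            - q ^ (n + 1 + m) • (Tb f q n m 0).comp (Phi f (n + 1 + 1))).comp
            (DirectSum.lof ℂ ℕ E (n + 1)) := by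
      have := claim f q hf n (n + 1) (Nat.le_succ n) m 0 (Nat.zero_le n)
      rw [show Ioc n (n + 1) = {n + 1} from Nat.Ioc_succ_singleton n,
        Finset.sum_singleton] at this
      exact this
    have hW : (Tb f q n (m + 1) 0).comp ((DirectSum.lof ℂ ℕ E (n + 1)).comp (f n (n + 1)))
        = ((Tb f q n (m + 1) 0).comp (Phi f (n + 1))).comp (DirectSum.lof ℂ ℕ E n) := by
      rw [LinearMap.comp_assoc, Phi_lof]
    have h2 : (f (n + 1) (n + 1 + 1)).comp (f n (n + 1))
        = (f (n + 1) (n + 1)).comp (f n (n + 1)) := by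
      have := hf n (n + 1) (n + 2) (by omega) (by omega)
      simpa using this
    have hcancelterm :
        ((Tb f q n m 0).comp (Phi f (n + 1))).comp
            ((DirectSum.lof ℂ ℕ E (n + 1)).comp (f n (n + 1)))
          = ((Tb f q n m 0).comp (Phi f (n + 1 + 1))).comp
            ((DirectSum.lof ℂ ℕ E (n + 1)).comp (f n (n + 1))) := by
      ext x
      simp only [LinearMap.comp_apply]
      have p1 := LinearMap.congr_fun (Phi_lof f (n + 1) (n + 1)) (f n (n + 1) x)
      have p2 := LinearMap.congr_fun (Phi_lof f (n + 1 + 1) (n + 1)) (f n (n + 1) x)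
      have p3 := LinearMap.congr_fun h2 x
      simp only [LinearMap.comp_apply] at p1 p2 p3
      rw [p1, p2, ← p3]
    have hassoc : ((Tb f q n m 0).comp (Phi f (n + 1))).comp (DirectSum.lof ℂ ℕ E n)
        = ((Tb f q n m 0).comp (DirectSum.lof ℂ ℕ E (n + 1))).comp (f n (n + 1)) := by
      rw [LinearMap.comp_assoc, Phi_lof, ← LinearMap.comp_assoc]
    have hBf : (Dt f q 0).comp
          (((Tb f q n m 0).comp (Phi f (n + 1))).comp (DirectSum.lof ℂ ℕ E n))
        = (∑ i ∈ range (m + 1), q ^ i) •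
            (((Tb f q n (m + 1) 0).comp (Phi f (n + 1))).comp (DirectSum.lof ℂ ℕ E n)) := by
      rw [hassoc, ← LinearMap.comp_assoc, hB, LinearMap.comp_assoc,
        LinearMap.sub_comp, LinearMap.add_comp, LinearMap.smul_comp,
        LinearMap.smul_comp, LinearMap.smul_comp]
      have hc : q ^ (m + (n + 1)) •
            ((Tb f q n m 0).comp (Phi f (n + 1))).comp
              ((DirectSum.lof ℂ ℕ E (n + 1)).comp (f n (n + 1)))
          = q ^ (n + 1 + m) •
            ((Tb f q n m 0).comp (Phi f (n + 1 + 1))).comp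
              ((DirectSum.lof ℂ ℕ E (n + 1)).comp (f n (n + 1))) := by
        rw [hcancelterm]
        congr 1
        ring
      rw [hc, add_sub_cancel_right, hW]
    rw [LinearMap.sub_comp, LinearMap.smul_comp, LinearMap.comp_sub,
      LinearMap.comp_smul, hA, hBf, LinearMap.sub_comp, LinearMap.smul_comp,
      LinearMap.smul_comp, LinearMap.sub_comp, LinearMap.smul_comp]
    simp only [smul_sub, smul_smul]
    rw [sub_sub, ← add_smul]
    refine congrArg₂ (· - ·) (congrArg₂ (· • ·) ?_ rfl) (congrArg₂ (· • ·) ?_ rfl)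
    · rw [Finset.prod_range_succ (fun j => ∑ i ∈ range (j + 1), q ^ i) (m + 1)]
    · rw [Finset.prod_range_succ (fun j => ∑ i ∈ range (j + 1), q ^ i) (m + 1),
        geom_sum_succ' (x := q) (n := m + 1), pow_add]
      ring
end CopresAux

/-- for a copresimplicial complex vector space `(E^n)` with
cofaces `f_k : E^n → E^(n+1)` (`0 ≤ k ≤ n+1`) satisfying `f_ℓ f_k = f_k f_(ℓ-1)`
for `k < ℓ`, and `q` a primitive `N`-th root of unity (`N ≥ 2`), the operator
`d_q(x) = ∑_{k=0}^n q^k f_k(x) - q^n f_(n+1)(x)` satisfies `(d_q)^N = 0`. -/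
theorem copresimplicial_dq_pow_N_eq_zero
    (E : ℕ → Type*) [∀ n, AddCommGroup (E n)] [∀ n, Module ℂ (E n)]
    (f : ∀ n, ℕ → (E n →ₗ[ℂ] E (n + 1)))
    (hf : ∀ n k l, k < l → l ≤ n + 2 →
      (f (n + 1) l).comp (f n k) = (f (n + 1) k).comp (f n (l - 1)))
    (N : ℕ) (hN : 2 ≤ N) (q : ℂ) (hq : IsPrimitiveRoot q N) :
    ∀ n, opIter (fun n =>
        (∑ k ∈ Finset.range (n + 1), q ^ k • f n k) - q ^ n • f n (n + 1))
      N n = 0 := by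
  intro n
  have hN1 : N - 1 + 1 = N := by omega
  have key := main_prop f q hf n (N - 1)
  rw [hN1] at key
  have hc : (∏ j ∈ Finset.range N, ∑ i ∈ Finset.range (j + 1), q ^ i) = 0 := by
    refine Finset.prod_eq_zero (i := N - 1) (Finset.mem_range.mpr (by omega)) ?_
    rw [hN1]
    exact hq.geom_sum_eq_zero (by omega)
  rw [hc, zero_smul] at key
  ext x
  have h1 := LinearMap.congr_fun key x
  simp only [LinearMap.comp_apply, LinearMap.zero_apply] at h1 ⊢
  have h2 := congrArg (DirectSum.component ℂ ℕ E (n + N)) h1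
  rwa [DirectSum.component.lof_self, map_zero] at h2
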